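/- arXiv:1403.3788 — 6 statements merged into one kernel-verified Lean document; each statement's English description precedes it below -/
import Mathlib

section
/- Let k and l be nonnegative integers and let f : ℝ → ℝ be k times continuously differentiable. Then for every s ∈ ℝ, s^l · f^{(k)}(s) = Σ_{m=0}^{min(l,k)} ((−1)^m (l−m+1)_m (k−m+1)_m / m!) · d^{k−m}/ds^{k−m} [ s^{l−m} f(s) ], where d^{j}/ds^{j}[s^{i} f(s)] denotes the j-th derivative of the function s ↦ s^{i} f(s). -/
/-!
Induct on `l`. By the Leibniz rule, `D^j [s g] = s D^j g + j D^(j-1) g`, so multiplying the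
identity for `l` by `s` moves one more power of `s` under each derivative at the cost of a
lower-order term. The coefficients `(-1)^m C(l, m) k (k-1) ⋯ (k-m+1)` absorb these terms through
Pascal's rule, and they equal the Pochhammer expression since `(n-m+1)_m = n (n-1) ⋯ (n-m+1)`.
-/

noncomputable def poch (x : ℝ) (n : ℕ) : ℝ := ∏ i ∈ Finset.range n, (x + i)

open Finset

theorem iteratedDeriv_fun_id_mul {𝕜 : Type*} [NontriviallyNormedField 𝕜] {n : ℕ} {g : 𝕜 → 𝕜}
    {x : 𝕜} (hg : ContDiffAt 𝕜 n g x) :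
    iteratedDeriv n (fun y => y * g y) x
      = x * iteratedDeriv n g x + n * iteratedDeriv (n - 1) g x := by
  rw [iteratedDeriv_fun_mul (f := fun y => y) contDiffAt_fun_id hg]
  rcases n with _ | n
  · simp
  · rw [sum_range_succ', sum_range_succ']
    simp [iteratedDeriv_fun_id]
    ring

def orderChangeCoeff (k l m : ℕ) : ℤ := (-1) ^ m * l.choose m * k.descFactorial m

@[simp]
theorem orderChangeCoeff_zero_right (k l : ℕ) : orderChangeCoeff k l 0 = 1 := by
  simp [orderChangeCoeff]

theorem orderChangeCoeff_of_lt_left {k l m : ℕ} (h : l < m) : orderChangeCoeff k l m = 0 := by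
  simp [orderChangeCoeff, Nat.choose_eq_zero_of_lt h]

theorem orderChangeCoeff_of_lt_right {k l m : ℕ} (h : k < m) : orderChangeCoeff k l m = 0 := by
  simp [orderChangeCoeff, Nat.descFactorial_eq_zero_iff_lt.mpr h]

theorem orderChangeCoeff_succ_succ (k l m : ℕ) :
    orderChangeCoeff k (l + 1) (m + 1)
      = orderChangeCoeff k l (m + 1) - (k - m : ℕ) * orderChangeCoeff k l m := by
  simp only [orderChangeCoeff, Nat.choose_succ_succ', Nat.descFactorial_succ]
  push_cast
  ring

theorem pow_mul_iteratedDeriv_eq_sum {𝕜 : Type*} [NontriviallyNormedField 𝕜] {k : ℕ}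
    {f : 𝕜 → 𝕜} (hf : ContDiff 𝕜 k f) (l : ℕ) (s : 𝕜) :
    s ^ l * iteratedDeriv k f s = ∑ m ∈ range (l + 1),
      (orderChangeCoeff k l m : 𝕜) * iteratedDeriv (k - m) (fun x => x ^ (l - m) * f x) s := by
  induction l with
  | zero => simp
  | succ l ih =>
    set G : ℕ → 𝕜 := fun m => iteratedDeriv (k - m) (fun x => x ^ (l + 1 - m) * f x) s
    have hstep : ∀ m ∈ range (l + 1),
        s * iteratedDeriv (k - m) (fun x => x ^ (l - m) * f x) s
          = G m - (k - m : ℕ) * G (m + 1) := by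
      intro m hm
      have hpow : (fun x => x ^ (l + 1 - m) * f x) = fun x => x * (x ^ (l - m) * f x) := by
        ext x
        rw [show l + 1 - m = l - m + 1 by grind]
        ring
      have hg : ContDiff 𝕜 (k - m : ℕ) (fun x => x ^ (l - m) * f x) :=
        (contDiff_id.pow _).mul (hf.of_le (by exact_mod_cast k.sub_le m))
      simp only [G, hpow, Nat.add_sub_add_right, iteratedDeriv_fun_id_mul hg.contDiffAt,
        Nat.sub_sub]
      ring
    have hshift : ∑ m ∈ range (l + 1), (orderChangeCoeff k l m : 𝕜) * G m
        = G 0 + ∑ m ∈ range (l + 1), (orderChangeCoeff k l (m + 1) : 𝕜) * G (m + 1) := by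
      rw [sum_range_succ' (fun m => (orderChangeCoeff k l m : 𝕜) * G m),
        sum_range_succ (fun m => (orderChangeCoeff k l (m + 1) : 𝕜) * G (m + 1)),
        orderChangeCoeff_of_lt_left l.lt_succ_self]
      simp [add_comm]
    calc s ^ (l + 1) * iteratedDeriv k f s
        = ∑ m ∈ range (l + 1),
            (orderChangeCoeff k l m : 𝕜) * (G m - (k - m : ℕ) * G (m + 1)) := by
          rw [pow_succ', mul_assoc, ih, mul_sum]
          refine sum_congr rfl fun m hm => ?_
          rw [← hstep m hm]
          ring
      _ = ∑ m ∈ range (l + 2), (orderChangeCoeff k (l + 1) m : 𝕜) * G m := by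
          simp only [sum_range_succ' _ (l + 1), orderChangeCoeff_succ_succ,
            orderChangeCoeff_zero_right, mul_sub, sum_sub_distrib, hshift, add_sub_assoc]
          push_cast
          rw [one_mul, add_comm (G 0), ← sum_sub_distrib]
          exact congrArg (· + G 0) (sum_congr rfl fun m _ => by ring)

theorem poch_natCast (a m : ℕ) : poch a m = a.ascFactorial m := by
  simp [poch, Nat.ascFactorial_eq_prod_range]

theorem poch_sub_add_one {n m : ℕ} (h : m ≤ n) : poch (n - m + 1 : ℕ) m = n.descFactorial m := by
  rw [poch_natCast, ← Nat.add_descFactorial_eq_ascFactorial, Nat.sub_add_cancel h]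

theorem orderChangeCoeff_eq_poch {k l m : ℕ} (hl : m ≤ l) (hk : m ≤ k) :
    (orderChangeCoeff k l m : ℝ) = (-1 : ℝ) ^ m * poch ((l - m + 1 : ℕ) : ℝ) m
      * poch ((k - m + 1 : ℕ) : ℝ) m / m.factorial := by
  rw [poch_sub_add_one hl, poch_sub_add_one hk, Nat.descFactorial_eq_factorial_mul_choose l]
  push_cast [orderChangeCoeff]
  field_simp

/-- Order-changing rule: for `f` k-times continuously differentiable,
`s^l f^(k)(s) = Σ_{m=0}^{min(l,k)} ((−1)^m (l−m+1)_m (k−m+1)_m / m!) (d/ds)^{k−m} [s^{l−m} f(s)]`. -/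
theorem stmt2 (k l : ℕ) (f : ℝ → ℝ) (hf : ContDiff ℝ k f) (s : ℝ) :
    s ^ l * iteratedDeriv k f s =
      ∑ m ∈ Finset.range (min l k + 1),
        ((-1 : ℝ) ^ m * poch ((l - m + 1 : ℕ) : ℝ) m * poch ((k - m + 1 : ℕ) : ℝ) m
            / (m.factorial : ℝ)) *
          iteratedDeriv (k - m) (fun x => x ^ (l - m) * f x) s := by
  rw [pow_mul_iteratedDeriv_eq_sum hf l s]
  calc _ = ∑ m ∈ range (min l k + 1),
        (orderChangeCoeff k l m : ℝ) * iteratedDeriv (k - m) (fun x => x ^ (l - m) * f x) s := by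
        refine (sum_subset (range_subset_range.mpr (by omega)) fun m hm hm' => ?_).symm
        rw [orderChangeCoeff_of_lt_right (by grind), Int.cast_zero, zero_mul]
    _ = _ := sum_congr rfl fun m hm => by
        rw [orderChangeCoeff_eq_poch (by grind) (by grind)]
end

section
/- Let N and N_R be positive integers, and let F : ℝ → ℝ be twice differentiable and satisfy Kummer's differential equation σ·F''(σ) + (N_R − σ)·F'(σ) − N·F(σ) = 0 for all σ ∈ ℝ. For a ∈ ℝ define M(s, a) = (1 − s)^{−N} F(a s/(1 − s)) for s ≠ 1. Then for every a ∈ ℝ and every s ≠ 1, s(1 − s)^2 · ∂_s^2 M(s, a) − [ 2(N + 1) s (1 − s) − (1 − s) N_R + a s ] · ∂_s M(s, a) + N [ (N + 1) s − N_R − a ] · M(s, a) = 0, where ∂_s denotes the partial derivative with respect to s. -/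
/-!
With `t = 1 - s` and `u = a s / t` one has `du/ds = a / t²`, so each `s`-derivative of a term
`G(u) / t^k` produces `k G(u) / t^(k+1) + a G'(u) / t^(k+2)`. Writing `M = F(u) / t^N` and
differentiating twice, the left-hand side collapses to `a / t^(N+1)` times Kummer's expression
`u F''(u) + (N_R - u) F'(u) - N F(u)`, which vanishes.
-/

open Topology

theorem hasDerivAt_mul_div_one_sub (a : ℝ) {x : ℝ} (hx : x ≠ 1) :
    HasDerivAt (fun y => a * y / (1 - y)) (a / (1 - x) ^ 2) x := by
  have hx' : (1 : ℝ) - x ≠ 0 := sub_ne_zero.mpr hx.symm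
  refine (((hasDerivAt_id' x).const_mul a).div ((hasDerivAt_id' x).const_sub 1) hx').congr_deriv ?_
  field_simp
  ring

theorem hasDerivAt_comp_mul_div_one_sub_div_pow {G : ℝ → ℝ} (a : ℝ) (k : ℕ) {x : ℝ}
    (hx : x ≠ 1) (hG : DifferentiableAt ℝ G (a * x / (1 - x))) :
    HasDerivAt (fun y => G (a * y / (1 - y)) / (1 - y) ^ k)
      (k * G (a * x / (1 - x)) / (1 - x) ^ (k + 1)
        + a * deriv G (a * x / (1 - x)) / (1 - x) ^ (k + 2)) x := by
  have hx' : (1 : ℝ) - x ≠ 0 := sub_ne_zero.mpr hx.symm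
  have hpow : HasDerivAt (fun y : ℝ => (1 - y) ^ k) (k * (1 - x) ^ (k - 1) * -1) x :=
    (hasDerivAt_pow k (1 - x)).comp x ((hasDerivAt_id' x).const_sub 1)
  refine ((hG.hasDerivAt.comp x (hasDerivAt_mul_div_one_sub a hx)).div hpow
    (pow_ne_zero k hx')).congr_deriv ?_
  rcases k with _ | k
  · simp only [Function.comp_apply, CharP.cast_eq_zero]
    field_simp
    ring
  · simp only [Function.comp_apply, Nat.add_sub_cancel, pow_succ]
    field_simp
    push_cast
    ring

theorem kummer_transform_identity (N : ℕ) (NR a s f₀ f₁ f₂ : ℝ) (hs : s ≠ 1) :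
    s * (1 - s) ^ 2
        * (N * ((↑(N + 1) : ℝ) * f₀ / (1 - s) ^ (N + 1 + 1) + a * f₁ / (1 - s) ^ (N + 1 + 2))
          + a * ((↑(N + 2) : ℝ) * f₁ / (1 - s) ^ (N + 2 + 1) + a * f₂ / (1 - s) ^ (N + 2 + 2)))
      - (2 * ((N : ℝ) + 1) * s * (1 - s) - (1 - s) * NR + a * s)
        * (N * f₀ / (1 - s) ^ (N + 1) + a * f₁ / (1 - s) ^ (N + 2))
      + N * (((N : ℝ) + 1) * s - NR - a) * (f₀ / (1 - s) ^ N)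
      = a / (1 - s) ^ (N + 1)
        * (a * s / (1 - s) * f₂ + (NR - a * s / (1 - s)) * f₁ - N * f₀) := by
  have hs' : (1 : ℝ) - s ≠ 0 := sub_ne_zero.mpr hs.symm
  simp only [pow_add, pow_one]
  field_simp
  push_cast
  ring

theorem stmt4_general (N NR : ℕ) (F : ℝ → ℝ)
    (hF : Differentiable ℝ F) (hF' : Differentiable ℝ (deriv F))
    (hKummer : ∀ σ : ℝ,
      σ * deriv (deriv F) σ + ((NR : ℝ) - σ) * deriv F σ - (N : ℝ) * F σ = 0)
    (M : ℝ → ℝ → ℝ)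
    (hM : ∀ s a : ℝ, M s a = (1 - s) ^ (-(N : ℤ)) * F (a * s / (1 - s))) :
    ∀ (a s : ℝ), s ≠ 1 →
      s * (1 - s) ^ 2 * deriv (deriv (fun s' => M s' a)) s
        - (2 * ((N : ℝ) + 1) * s * (1 - s) - (1 - s) * (NR : ℝ) + a * s)
            * deriv (fun s' => M s' a) s
        + (N : ℝ) * (((N : ℝ) + 1) * s - (NR : ℝ) - a) * M s a = 0 := by
  intro a s hs
  have hM_div : ∀ x, M x a = F (a * x / (1 - x)) / (1 - x) ^ N := fun x => by
    rw [hM, zpow_neg, zpow_natCast, inv_mul_eq_div]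
  have hM_deriv : ∀ x, x ≠ 1 → HasDerivAt (fun s' => M s' a)
      (N * F (a * x / (1 - x)) / (1 - x) ^ (N + 1)
        + a * deriv F (a * x / (1 - x)) / (1 - x) ^ (N + 2)) x := fun x hx => by
    simpa only [hM_div] using hasDerivAt_comp_mul_div_one_sub_div_pow a N hx (hF _)
  have hM_deriv_eq : deriv (fun s' => M s' a) =ᶠ[𝓝 s] fun x =>
      N * (F (a * x / (1 - x)) / (1 - x) ^ (N + 1))
        + a * (deriv F (a * x / (1 - x)) / (1 - x) ^ (N + 2)) := by
    filter_upwards [isOpen_ne.mem_nhds hs] with x hx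
    rw [(hM_deriv x hx).deriv]
    ring
  have hM_deriv2 : HasDerivAt (fun x =>
      N * (F (a * x / (1 - x)) / (1 - x) ^ (N + 1))
        + a * (deriv F (a * x / (1 - x)) / (1 - x) ^ (N + 2))) _ s :=
    ((hasDerivAt_comp_mul_div_one_sub_div_pow a (N + 1) hs (hF _)).const_mul (N : ℝ)).add
      ((hasDerivAt_comp_mul_div_one_sub_div_pow a (N + 2) hs (hF' _)).const_mul a)
  rw [hM_deriv_eq.deriv_eq, hM_deriv2.deriv, (hM_deriv s hs).deriv, hM_div,
    kummer_transform_identity N NR a s _ _ _ hs, hKummer, mul_zero]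

/-- If `F` is twice differentiable and satisfies Kummer's equation
`σ F'' + (N_R − σ) F' − N F = 0`, and `M(s,a) = (1−s)^{−N} F(as/(1−s))`, then
`s(1−s)² ∂_s² M − [2(N+1)s(1−s) − (1−s)N_R + as] ∂_s M + N[(N+1)s − N_R − a] M = 0`
for every `a` and every `s ≠ 1`. -/
theorem stmt4 (N NR : ℕ) (hN : 0 < N) (hNR : 0 < NR) (F : ℝ → ℝ)
    (hF : Differentiable ℝ F) (hF' : Differentiable ℝ (deriv F))
    (hKummer : ∀ σ : ℝ,
      σ * deriv (deriv F) σ + ((NR : ℝ) - σ) * deriv F σ - (N : ℝ) * F σ = 0)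
    (M : ℝ → ℝ → ℝ)
    (hM : ∀ s a : ℝ, M s a = (1 - s) ^ (-(N : ℤ)) * F (a * s / (1 - s))) :
    ∀ (a s : ℝ), s ≠ 1 →
      s * (1 - s) ^ 2 * deriv (deriv (fun s' => M s' a)) s
        - (2 * ((N : ℝ) + 1) * s * (1 - s) - (1 - s) * (NR : ℝ) + a * s)
            * deriv (fun s' => M s' a) s
        + (N : ℝ) * (((N : ℝ) + 1) * s - (NR : ℝ) - a) * M s a = 0 :=
  stmt4_general N NR F hF hF' hKummer M hM
end

section
/- Let N and N_R be positive integers, and let F : ℝ → ℝ be twice differentiable and satisfy Kummer's differential equation σ·F''(σ) + (N_R − σ)·F'(σ) − N·F(σ) = 0 for all σ ∈ ℝ. For a ∈ ℝ define M(s, a) = (1 − s)^{−N} F(a s/(1 − s)) for s ≠ 1. Then for every a ∈ ℝ and every s ≠ 1, d²/ds²[s³ M(s,a)] − 2 d²/ds²[s² M(s,a)] + d²/ds²[s M(s,a)] + (2N − 4) d/ds[s² M(s,a)] + (6 − 2N − N_R − a) d/ds[s M(s,a)] + (N_R − 2) d/ds[M(s,a)] + (N − 1)(N − 2) s M(s,a)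 + (N − 1)(2 − N_R − a) M(s,a) = 0, where d^j/ds^j[s^i M(s,a)] denotes the j-th derivative of the function s ↦ s^i M(s, a). -/
/-!
Under the substitution `σ = a s / (1 - s)`, Kummer's equation for `F` becomes the second-order
equation
`s (1 - s)² M'' + ((2N + 2) s² - (2N + N_R + a + 2) s + N_R) M' + N ((N + 1) s - N_R - a) M = 0`
for `M = M(·, a)`. Expanding `(sⁱ M)'` and `(sⁱ M)''` by Leibniz's rule shows that the left-hand
side of the theorem is exactly this expression.
-/

open Filter Topology

section
variable {𝕜 : Type*} [NontriviallyNormedField 𝕜] {f g : 𝕜 → 𝕜} {x : 𝕜}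

/-- Weaker than `ContDiffAt 𝕜 2 f x`: the second derivative need not be continuous. -/
def TwiceDifferentiableAt (f : 𝕜 → 𝕜) (x : 𝕜) : Prop :=
  (∀ᶠ t in 𝓝 x, DifferentiableAt 𝕜 f t) ∧ DifferentiableAt 𝕜 (deriv f) x

theorem ContDiffAt.twiceDifferentiableAt (h : ContDiffAt 𝕜 2 f x) : TwiceDifferentiableAt f x :=
  ⟨(h.eventually (by simp)).mono fun _ ht => ht.differentiableAt (by simp),
    (h.derivWithin (m := 1) le_rfl).differentiableAt one_ne_zero⟩

namespace TwiceDifferentiableAt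

theorem differentiableAt (h : TwiceDifferentiableAt f x) : DifferentiableAt 𝕜 f x :=
  h.1.self_of_nhds

theorem deriv_mul_eventuallyEq (hf : TwiceDifferentiableAt f x) (hg : TwiceDifferentiableAt g x) :
    deriv (fun t => f t * g t) =ᶠ[𝓝 x] fun t => deriv f t * g t + f t * deriv g t := by
  filter_upwards [hf.1, hg.1] with t hft hgt using deriv_fun_mul hft hgt

theorem mul (hf : TwiceDifferentiableAt f x) (hg : TwiceDifferentiableAt g x) :
    TwiceDifferentiableAt (fun t => f t * g t) x := by
  refine ⟨?_, ?_⟩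
  · filter_upwards [hf.1, hg.1] with t hft hgt using hft.mul hgt
  · refine DifferentiableAt.congr_of_eventuallyEq ?_ (hf.deriv_mul_eventuallyEq hg)
    exact (hf.2.mul hg.differentiableAt).add (hf.differentiableAt.mul hg.2)

theorem deriv_deriv_mul (hf : TwiceDifferentiableAt f x) (hg : TwiceDifferentiableAt g x) :
    deriv (deriv fun t => f t * g t) x =
      deriv (deriv f) x * g x + 2 * (deriv f x * deriv g x) + f x * deriv (deriv g) x := by
  rw [(hf.deriv_mul_eventuallyEq hg).deriv_eq,
    ((hf.2.hasDerivAt.fun_mul hg.differentiableAt.hasDerivAt).fun_add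
      (hf.differentiableAt.hasDerivAt.fun_mul hg.2.hasDerivAt)).deriv]
  ring

theorem deriv_comp_eventuallyEq (hf : TwiceDifferentiableAt f (g x))
    (hg : TwiceDifferentiableAt g x) :
    deriv (fun t => f (g t)) =ᶠ[𝓝 x] fun t => deriv f (g t) * deriv g t := by
  filter_upwards [hg.differentiableAt.continuousAt.eventually hf.1, hg.1] with t hft hgt
    using deriv_comp t hft hgt

theorem comp (hf : TwiceDifferentiableAt f (g x)) (hg : TwiceDifferentiableAt g x) :
    TwiceDifferentiableAt (fun t => f (g t)) x := by
  refine ⟨?_, ?_⟩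
  · filter_upwards [hg.differentiableAt.continuousAt.eventually hf.1, hg.1] with t hft hgt
      using hft.comp t hgt
  · refine DifferentiableAt.congr_of_eventuallyEq ?_ (hf.deriv_comp_eventuallyEq hg)
    exact (hf.2.comp x hg.differentiableAt).mul hg.2

theorem deriv_deriv_comp (hf : TwiceDifferentiableAt f (g x)) (hg : TwiceDifferentiableAt g x) :
    deriv (deriv fun t => f (g t)) x =
      deriv (deriv f) (g x) * deriv g x ^ 2 + deriv f (g x) * deriv (deriv g) x := by
  rw [(hf.deriv_comp_eventuallyEq hg).deriv_eq]
  refine ((hf.2.hasDerivAt.comp x hg.differentiableAt.hasDerivAt).fun_mul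
    hg.2.hasDerivAt).deriv.trans ?_
  rw [Function.comp_apply]
  ring

end TwiceDifferentiableAt

theorem deriv_pow_mul (n : ℕ) (hf : DifferentiableAt 𝕜 f x) :
    deriv (fun t => t ^ n * f t) x = n * x ^ (n - 1) * f x + x ^ n * deriv f x := by
  rw [deriv_fun_mul (differentiableAt_pow n) hf, deriv_pow_field]

theorem deriv_deriv_pow_mul (n : ℕ) (hf : TwiceDifferentiableAt f x) :
    deriv (deriv fun t => t ^ n * f t) x =
      n * (n - 1) * x ^ (n - 2) * f x + 2 * n * x ^ (n - 1) * deriv f x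
        + x ^ n * deriv (deriv f) x := by
  have hp : TwiceDifferentiableAt (fun t : 𝕜 => t ^ n) x :=
    (contDiff_id.pow n).contDiffAt.twiceDifferentiableAt
  have hpow : deriv (deriv fun t : 𝕜 => t ^ n) x = n * (n - 1) * x ^ (n - 2) := by
    have := iter_deriv_pow n x 2
    simpa only [Finset.prod_range_succ, Finset.prod_range_zero, Function.iterate_succ,
      Function.iterate_zero, Function.comp_apply, id, Nat.cast_zero, Nat.cast_one, sub_zero,
      one_mul] using this
  rw [hp.deriv_deriv_mul hf, hpow]
  simp only [differentiableAt_fun_id, deriv_fun_pow, deriv_id'', mul_one]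
  ring

theorem deriv_one_sub_zpow (m : ℤ) :
    deriv (fun t : 𝕜 => (1 - t) ^ m) = fun t => -((m : 𝕜) * (1 - t) ^ (m - 1)) := by
  funext t
  rw [deriv_comp_const_sub (f := fun u : 𝕜 => u ^ m) (a := (1 : 𝕜)), deriv_zpow]

theorem deriv_deriv_one_sub_zpow (m : ℤ) (x : 𝕜) :
    deriv (deriv fun t : 𝕜 => (1 - t) ^ m) x = m * (m - 1) * (1 - x) ^ (m - 2) := by
  simp [deriv_one_sub_zpow, sub_sub, mul_assoc]

theorem differentiableAt_one_sub_zpow (m : ℤ) (hx : x ≠ 1) :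
    DifferentiableAt 𝕜 (fun t => (1 - t) ^ m) x :=
  (differentiableAt_const 1 |>.sub differentiableAt_id).zpow (Or.inl (sub_ne_zero.2 hx.symm))

theorem twiceDifferentiableAt_one_sub_zpow (m : ℤ) (hx : x ≠ 1) :
    TwiceDifferentiableAt (fun t => (1 - t) ^ m) x := by
  refine ⟨(eventually_ne_nhds hx).mono fun t ht => differentiableAt_one_sub_zpow m ht, ?_⟩
  rw [deriv_one_sub_zpow]
  exact ((differentiableAt_one_sub_zpow (m - 1) hx).const_mul _).neg

theorem mul_div_one_sub_eventuallyEq (a : 𝕜) (hx : x ≠ 1) :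
    (fun t => a * t / (1 - t)) =ᶠ[𝓝 x] fun t => a * (1 - t) ^ (-1 : ℤ) - a := by
  filter_upwards [eventually_ne_nhds hx] with t ht
  have : (1 : 𝕜) - t ≠ 0 := sub_ne_zero.2 ht.symm
  field_simp
  ring

theorem deriv_mul_div_one_sub_eventuallyEq (a : 𝕜) (hx : x ≠ 1) :
    deriv (fun t => a * t / (1 - t)) =ᶠ[𝓝 x] fun t => a * (1 - t) ^ (-2 : ℤ) := by
  refine (mul_div_one_sub_eventuallyEq a hx).deriv.trans (.of_eq ?_)
  funext t
  rw [deriv_sub_const, deriv_const_mul_field', deriv_one_sub_zpow]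
  norm_num

theorem deriv_deriv_mul_div_one_sub (a : 𝕜) (hx : x ≠ 1) :
    deriv (deriv fun t => a * t / (1 - t)) x = 2 * a * (1 - x) ^ (-3 : ℤ) := by
  rw [(deriv_mul_div_one_sub_eventuallyEq a hx).deriv_eq, deriv_const_mul_field',
    deriv_one_sub_zpow]
  norm_num
  ring

theorem twiceDifferentiableAt_mul_div_one_sub (a : 𝕜) (hx : x ≠ 1) :
    TwiceDifferentiableAt (fun t => a * t / (1 - t)) x := by
  have : (1 : 𝕜) - x ≠ 0 := sub_ne_zero.2 hx.symm
  exact ContDiffAt.twiceDifferentiableAt (by fun_prop (disch := exact this))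

theorem twiceDifferentiableAt_one_sub_zpow_mul_comp (n : ℤ) (a : 𝕜) (hx : x ≠ 1)
    (hf : TwiceDifferentiableAt f (a * x / (1 - x))) :
    TwiceDifferentiableAt (fun t => (1 - t) ^ n * f (a * t / (1 - t))) x :=
  (twiceDifferentiableAt_one_sub_zpow n hx).mul
    (hf.comp (g := fun t => a * t / (1 - t)) (twiceDifferentiableAt_mul_div_one_sub a hx))

theorem ode_one_sub_zpow_mul_comp_of_kummer {m : 𝕜 → 𝕜} (n : ℤ) (r a : 𝕜) (hx : x ≠ 1)
    (hm : ∀ t, m t = (1 - t) ^ (-n) * f (a * t / (1 - t)))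
    (hf : TwiceDifferentiableAt f (a * x / (1 - x)))
    (hK : a * x / (1 - x) * deriv (deriv f) (a * x / (1 - x))
      + (r - a * x / (1 - x)) * deriv f (a * x / (1 - x)) - n * f (a * x / (1 - x)) = 0) :
    x * (1 - x) ^ 2 * deriv (deriv m) x
      + ((2 * n + 2) * x ^ 2 - (2 + 2 * n + r + a) * x + r) * deriv m x
      + n * ((n + 1) * x - r - a) * m x = 0 := by
  obtain rfl : m = _ := funext hm
  beta_reduce
  have hu : (1 : 𝕜) - x ≠ 0 := sub_ne_zero.2 hx.symm
  have hσ := twiceDifferentiableAt_mul_div_one_sub a hx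
  have hg := twiceDifferentiableAt_one_sub_zpow (-n) hx
  have hfσ := hf.comp (g := fun t => a * t / (1 - t)) hσ
  have hfσ1 : deriv (fun t => f (a * t / (1 - t))) x =
      deriv f (a * x / (1 - x)) * deriv (fun t => a * t / (1 - t)) x :=
    deriv_comp x hf.differentiableAt hσ.differentiableAt
  have hm1 := deriv_fun_mul hg.differentiableAt hfσ.differentiableAt
  have hm2 := hg.deriv_deriv_mul hfσ
  rw [hf.deriv_deriv_comp (g := fun t => a * t / (1 - t)) hσ, hfσ1] at hm2
  rw [hfσ1] at hm1
  rw [hm1, hm2, deriv_deriv_one_sub_zpow, deriv_one_sub_zpow,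
    (deriv_mul_div_one_sub_eventuallyEq a hx).self_of_nhds, deriv_deriv_mul_div_one_sub a hx]
  generalize f (a * x / (1 - x)) = f₀ at hK ⊢
  generalize deriv f (a * x / (1 - x)) = f₁ at hK ⊢
  generalize deriv (deriv f) (a * x / (1 - x)) = f₂ at hK ⊢
  field_simp at hK
  simp only [zpow_sub₀ hu, zpow_neg, Int.cast_neg]
  field_simp
  linear_combination a * hK

end

theorem stmt5_general (N NR : ℕ) (F : ℝ → ℝ)
    (hF : Differentiable ℝ F) (hF' : Differentiable ℝ (deriv F))
    (hKummer : ∀ σ : ℝ,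
      σ * deriv (deriv F) σ + ((NR : ℝ) - σ) * deriv F σ - (N : ℝ) * F σ = 0)
    (M : ℝ → ℝ → ℝ)
    (hM : ∀ s a : ℝ, M s a = (1 - s) ^ (-(N : ℤ)) * F (a * s / (1 - s))) :
    ∀ (a s : ℝ), s ≠ 1 →
      deriv (deriv (fun s' => s' ^ 3 * M s' a)) s
        - 2 * deriv (deriv (fun s' => s' ^ 2 * M s' a)) s
        + deriv (deriv (fun s' => s' * M s' a)) s
        + (2 * (N : ℝ) - 4) * deriv (fun s' => s' ^ 2 * M s' a) s
        + (6 - 2 * (N : ℝ) - (NR : ℝ) - a) * deriv (fun s' => s' * M s' a) s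
        + ((NR : ℝ) - 2) * deriv (fun s' => M s' a) s
        + ((N : ℝ) - 1) * ((N : ℝ) - 2) * s * M s a
        + ((N : ℝ) - 1) * (2 - (NR : ℝ) - a) * M s a = 0 := by
  intro a s hs
  have hF₂ : TwiceDifferentiableAt F (a * s / (1 - s)) := ⟨.of_forall hF, hF' _⟩
  have hMa : (fun t => M t a) = fun t => (1 - t) ^ (-(N : ℤ)) * F (a * t / (1 - t)) :=
    funext (hM · a)
  have hm : TwiceDifferentiableAt (fun t => M t a) s :=
    hMa ▸ twiceDifferentiableAt_one_sub_zpow_mul_comp _ a hs hF₂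
  have hode := ode_one_sub_zpow_mul_comp_of_kummer N (NR : ℝ) a hs (hM · a) hF₂
    (by exact_mod_cast hKummer _)
  have h1 := deriv_pow_mul 1 hm.differentiableAt
  have h1' := deriv_deriv_pow_mul 1 hm
  simp only [pow_one] at h1 h1'
  rw [deriv_deriv_pow_mul 3 hm, deriv_deriv_pow_mul 2 hm, h1', deriv_pow_mul 2 hm.differentiableAt,
    h1]
  norm_num
  linear_combination hode

/-- If `F` is twice differentiable and satisfies Kummer's equation
`σ F'' + (N_R − σ) F' − N F = 0`, and `M(s,a) = (1−s)^{−N} F(as/(1−s))`, then, for every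
`a` and every `s ≠ 1`,
`d²/ds²[s³M] − 2 d²/ds²[s²M] + d²/ds²[sM] + (2N−4) d/ds[s²M] + (6−2N−N_R−a) d/ds[sM]
 + (N_R−2) d/ds[M] + (N−1)(N−2) s M + (N−1)(2−N_R−a) M = 0`. -/
theorem stmt5 (N NR : ℕ) (hN : 0 < N) (hNR : 0 < NR) (F : ℝ → ℝ)
    (hF : Differentiable ℝ F) (hF' : Differentiable ℝ (deriv F))
    (hKummer : ∀ σ : ℝ,
      σ * deriv (deriv F) σ + ((NR : ℝ) - σ) * deriv F σ - (N : ℝ) * F σ = 0)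
    (M : ℝ → ℝ → ℝ)
    (hM : ∀ s a : ℝ, M s a = (1 - s) ^ (-(N : ℤ)) * F (a * s / (1 - s))) :
    ∀ (a s : ℝ), s ≠ 1 →
      deriv (deriv (fun s' => s' ^ 3 * M s' a)) s
        - 2 * deriv (deriv (fun s' => s' ^ 2 * M s' a)) s
        + deriv (deriv (fun s' => s' * M s' a)) s
        + (2 * (N : ℝ) - 4) * deriv (fun s' => s' ^ 2 * M s' a) s
        + (6 - 2 * (N : ℝ) - (NR : ℝ) - a) * deriv (fun s' => s' * M s' a) s
        + ((NR : ℝ) - 2) * deriv (fun s' => M s' a) s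
        + ((N : ℝ) - 1) * ((N : ℝ) - 2) * s * M s a
        + ((N : ℝ) - 1) * (2 - (NR : ℝ) - a) * M s a = 0 :=
  stmt5_general N NR F hF hF' hKummer M hM
end

section
/- Let l ≥ 1 and k ≥ 0 be integers, let s < 0 be real, and let p : ℝ → ℝ be l times continuously differentiable on [0, ∞). Assume there is an open neighborhood U of s such that for every 0 ≤ j ≤ l and every 0 ≤ i ≤ k: the function t ↦ t^i e^{σ t} p^{(j)}(t) is integrable on (0, ∞) for every σ ∈ U, and e^{σ t} t^i p^{(j)}(t) → 0 as t → ∞ for every σ ∈ U. Define M(σ) = ∫_0^∞ e^{σ t} p(t) dt for σ ∈ U. Then ∫_0^∞ e^{s t} t^k p^{(l)}(t) dt = (−1)^l · d^k/dσ^k [σ^l M(σ)]|_{σ = s} + Σ_{m=k+1}^{l} (−1)^m p^{(l−m)}(0) · ((m−1)!/(m−k−1)!) · s^{m−k−1}, where the sum is empty when l ≤ k. -/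
/-!
Write `L_j(σ) = ∫_0^∞ e^{σt} p^{(j)}(t) dt`. Integration by parts gives
`L_{j+1}(σ) = -p^{(j)}(0) - σ L_j(σ)`, and iterating this `l` times shows that near `s`,
`σ^l M(σ)` is `(-1)^l` times `L_l(σ)` minus a polynomial of degree `< l` whose coefficients are
the boundary values `p^{(j)}(0)`. Differentiating `k` times under the integral sign turns `L_l(s)`
into `∫_0^∞ t^k e^{st} p^{(l)}(t) dt`, while the `k`-th derivative of the polynomial is the
boundary sum.
-/

open MeasureTheory Filter Set Topology

theorem iteratedDeriv_eq_of_hasDerivAt_succ {𝕜 F : Type*} [NontriviallyNormedField 𝕜]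
    [NormedAddCommGroup F] [NormedSpace 𝕜 F] {U : Set 𝕜} (hU : IsOpen U) {k : ℕ}
    {G : ℕ → 𝕜 → F} (hG : ∀ i < k, ∀ x ∈ U, HasDerivAt (G i) (G (i + 1) x) x)
    {x : 𝕜} (hx : x ∈ U) :
    iteratedDeriv k (G 0) x = G k x := by
  induction k generalizing x with
  | zero => simp
  | succ k ih =>
    have hEq : iteratedDeriv k (G 0) =ᶠ[𝓝 x] G k :=
      eventually_of_mem (hU.mem_nhds hx) fun y hy => ih (fun i hi => hG i (by omega)) hy
    rw [iteratedDeriv_succ, hEq.deriv_eq]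
    exact (hG k k.lt_succ_self x hx).deriv

theorem iteratedDeriv_sub_eq_of_hasDerivAt_succ {𝕜 F : Type*} [NontriviallyNormedField 𝕜]
    [NormedAddCommGroup F] [NormedSpace 𝕜 F] {U : Set 𝕜} (hU : IsOpen U) {k : ℕ}
    {G : ℕ → 𝕜 → F} (hG : ∀ i < k, ∀ x ∈ U, HasDerivAt (G i) (G (i + 1) x) x)
    {P : 𝕜 → F} (hP : ContDiff 𝕜 ⊤ P) {x : 𝕜} (hx : x ∈ U) :
    iteratedDeriv k (fun y => G 0 y - P y) x = G k x - iteratedDeriv k P x := by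
  refine iteratedDeriv_eq_of_hasDerivAt_succ (G := fun i y => G i y - iteratedDeriv i P y) hU
    (fun i hi y hy => (hG i hi y hy).sub ?_) hx
  rw [iteratedDeriv_succ]
  exact ((hP.differentiable_iteratedDeriv i (WithTop.coe_lt_top _)) y).hasDerivAt

theorem iteratedDeriv_sum_mul_pow {𝕜 : Type*} [NontriviallyNormedField 𝕜] (a : ℕ → 𝕜) (l k : ℕ)
    (x : 𝕜) :
    iteratedDeriv k (fun y => ∑ n ∈ Finset.range l, a n * y ^ n) x =
      ∑ n ∈ Finset.range l, a n * (n.descFactorial k * x ^ (n - k)) := by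
  rw [iteratedDeriv_fun_sum fun n _ => by fun_prop]
  simp [iteratedDeriv_const_mul_field]

theorem hasDerivAt_integral_pow_mul_exp_mul {f : ℝ → ℝ} {U : Set ℝ} (hU : IsOpen U) {i : ℕ}
    (hf : ∀ σ ∈ U, IntegrableOn (fun t => t ^ i * Real.exp (σ * t) * f t) (Ioi 0))
    (hf' : ∀ σ ∈ U, IntegrableOn (fun t => t ^ (i + 1) * Real.exp (σ * t) * f t) (Ioi 0))
    {σ₀ : ℝ} (hσ₀ : σ₀ ∈ U) :
    HasDerivAt (fun σ => ∫ t in Ioi 0, t ^ i * Real.exp (σ * t) * f t)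
      (∫ t in Ioi 0, t ^ (i + 1) * Real.exp (σ₀ * t) * f t) σ₀ := by
  obtain ⟨ε, hε, hball⟩ := Metric.isOpen_iff.mp hU σ₀ hσ₀
  have hδ : 0 < ε / 2 := by positivity
  have hσ₁ : σ₀ + ε / 2 ∈ U := hball <| by
    rw [Metric.mem_ball, Real.dist_eq, add_sub_cancel_left, abs_of_pos hδ]; linarith
  -- for `t > 0`, `σ ↦ exp (σ * t)` is increasing, so the right end of the ball dominates
  refine (hasDerivAt_integral_of_dominated_loc_of_deriv_le (Metric.ball_mem_nhds σ₀ hδ)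
    (F' := fun σ t => t ^ (i + 1) * Real.exp (σ * t) * f t)
    (bound := fun t => t ^ (i + 1) * Real.exp ((σ₀ + ε / 2) * t) * |f t|)
    (eventually_of_mem (hU.mem_nhds hσ₀) fun σ hσ => (hf σ hσ).aestronglyMeasurable)
    (hf σ₀ hσ₀) (hf' σ₀ hσ₀).aestronglyMeasurable ?_ ?_ ?_).2
  · filter_upwards [ae_restrict_mem measurableSet_Ioi] with t (ht : 0 < t) σ hσ
    have hσle : σ ≤ σ₀ + ε / 2 := by
      have := (abs_lt.mp (Real.dist_eq σ σ₀ ▸ Metric.mem_ball.mp hσ)).2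
      linarith
    rw [Real.norm_eq_abs, abs_mul, abs_mul, abs_of_nonneg (pow_nonneg ht.le _), Real.abs_exp]
    gcongr
  · refine (hf' _ hσ₁).abs.congr ?_
    filter_upwards [ae_restrict_mem measurableSet_Ioi] with t (ht : 0 < t)
    rw [abs_mul, abs_mul, abs_of_nonneg (pow_nonneg ht.le _), Real.abs_exp]
  · refine Eventually.of_forall fun t σ _ => ?_
    have hexp : HasDerivAt (fun σ => Real.exp (σ * t)) (Real.exp (σ * t) * t) σ :=
      (hasDerivAt_mul_const t).exp
    exact ((hexp.const_mul (t ^ i)).mul_const (f t)).congr_deriv (by ring)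

theorem integral_Ioi_exp_mul_mul_deriv {f f' : ℝ → ℝ} {σ : ℝ}
    (hf : ∀ t ∈ Ioi 0, HasDerivAt f (f' t) t) (hf₀ : ContinuousWithinAt f (Ioi 0) 0)
    (hint : IntegrableOn (fun t => Real.exp (σ * t) * f t) (Ioi 0))
    (hint' : IntegrableOn (fun t => Real.exp (σ * t) * f' t) (Ioi 0))
    (hlim : Tendsto (fun t => Real.exp (σ * t) * f t) atTop (𝓝 0)) :
    ∫ t in Ioi 0, Real.exp (σ * t) * f' t = -f 0 - σ * ∫ t in Ioi 0, Real.exp (σ * t) * f t := by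
  have hexp : ∀ t ∈ Ioi (0 : ℝ),
      HasDerivAt (fun t => Real.exp (σ * t)) (σ * Real.exp (σ * t)) t :=
    fun t _ => by simpa [mul_comm] using ((hasDerivAt_id t).const_mul σ).exp
  have hlim₀ : Tendsto (fun t => Real.exp (σ * t) * f t) (𝓝[>] 0) (𝓝 (f 0)) := by
    simpa [Pi.mul_def] using (((continuous_const_mul σ).rexp.continuousWithinAt).mul hf₀).tendsto
  have hint_smul : IntegrableOn ((fun t => σ * Real.exp (σ * t)) * f) (Ioi 0) := by
    simpa only [IntegrableOn, Pi.mul_def, mul_assoc] using hint.const_mul σ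
  rw [integral_Ioi_mul_deriv_eq_deriv_mul hexp hf hint' hint_smul hlim₀ hlim, ← integral_const_mul]
  simp only [mul_assoc, zero_sub]

theorem eq_neg_pow_mul_add_sum_of_succ {R : Type*} [CommRing R] {L c : ℕ → R} {σ : R} {l : ℕ}
    (h : ∀ j < l, L (j + 1) = -c j - σ * L j) :
    L l = (-σ) ^ l * L 0 + ∑ n ∈ Finset.range l, (-1) ^ (n + 1) * c (l - 1 - n) * σ ^ n := by
  induction l with
  | zero => simp
  | succ l ih =>
    have hshift :
        ∑ n ∈ Finset.range l, (-1) ^ (n + 1 + 1) * c (l + 1 - 1 - (n + 1)) * σ ^ (n + 1) =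
          -σ * ∑ n ∈ Finset.range l, (-1) ^ (n + 1) * c (l - 1 - n) * σ ^ n := by
      rw [Finset.mul_sum]
      refine Finset.sum_congr rfl fun n _ => ?_
      rw [show l + 1 - 1 - (n + 1) = l - 1 - n by omega]
      ring
    rw [h l l.lt_succ_self, ih fun j hj => h j (by omega), Finset.sum_range_succ', hshift]
    simp only [Nat.add_sub_cancel, Nat.sub_zero]
    ring

theorem hasDerivAt_iteratedDerivWithin_Ici {F : Type*} [NormedAddCommGroup F] [NormedSpace ℝ F]
    {p : ℝ → F} {a : ℝ} {n : ℕ} (hp : ContDiffOn ℝ n p (Ici a)) {j : ℕ} (hj : j < n) {t : ℝ}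
    (ht : a < t) :
    HasDerivAt (iteratedDerivWithin j p (Ici a)) (iteratedDerivWithin (j + 1) p (Ici a) t) t := by
  have hnhds : Ici a ∈ 𝓝 t := Ici_mem_nhds ht
  rw [iteratedDerivWithin_succ, derivWithin_of_mem_nhds hnhds]
  exact ((hp.differentiableOn_iteratedDerivWithin (by exact_mod_cast hj) (uniqueDiffOn_Ici a) t
    ht.le).differentiableAt hnhds).hasDerivAt

theorem pow_mul_integral_exp_mul_eq {p : ℝ → ℝ} {l : ℕ} (hp : ContDiffOn ℝ l p (Ici 0)) {σ : ℝ}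
    (hint : ∀ j ≤ l,
      IntegrableOn (fun t => Real.exp (σ * t) * iteratedDerivWithin j p (Ici 0) t) (Ioi 0))
    (hlim : ∀ j < l,
      Tendsto (fun t => Real.exp (σ * t) * iteratedDerivWithin j p (Ici 0) t) atTop (𝓝 0)) :
    σ ^ l * ∫ t in Ioi 0, Real.exp (σ * t) * p t =
      (-1) ^ l * ((∫ t in Ioi 0, Real.exp (σ * t) * iteratedDerivWithin l p (Ici 0) t) -
        ∑ n ∈ Finset.range l,
          (-1) ^ (n + 1) * iteratedDerivWithin (l - 1 - n) p (Ici 0) 0 * σ ^ n) := by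
  have hrec := eq_neg_pow_mul_add_sum_of_succ (σ := σ)
    (L := fun j => ∫ t in Ioi 0, Real.exp (σ * t) * iteratedDerivWithin j p (Ici 0) t)
    (c := fun j => iteratedDerivWithin j p (Ici 0) 0) fun j hj =>
      integral_Ioi_exp_mul_mul_deriv (fun t ht => hasDerivAt_iteratedDerivWithin_Ici hp hj ht)
        ((hp.continuousOn_iteratedDerivWithin (by exact_mod_cast hj.le) (uniqueDiffOn_Ici 0) 0
          self_mem_Ici).mono Ioi_subset_Ici_self) (hint j hj.le) (hint (j + 1) hj) (hlim j hj)
  simp only [iteratedDerivWithin_zero] at hrec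
  rw [hrec, add_sub_cancel_right, neg_pow σ, ← mul_assoc, ← mul_assoc, ← mul_pow]
  norm_num

theorem sum_range_mul_descFactorial_eq_sum_Icc (c : ℕ → ℝ) (l k : ℕ) (s : ℝ) :
    ∑ n ∈ Finset.range l, (-1) ^ (n + 1) * c (l - 1 - n) * (n.descFactorial k * s ^ (n - k)) =
      ∑ m ∈ Finset.Icc (k + 1) l,
        (-1) ^ m * c (l - m) * (((m - 1).factorial : ℝ) / ((m - k - 1).factorial : ℝ)) *
          s ^ (m - k - 1) := by
  have hvanish : ∀ n ∈ Finset.range l, n ∉ Finset.Ico k l →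
      (-1) ^ (n + 1) * c (l - 1 - n) * (n.descFactorial k * s ^ (n - k)) = 0 := by
    intro n hn hnk
    simp only [Finset.mem_range, Finset.mem_Ico] at hn hnk
    simp [Nat.descFactorial_eq_zero_iff_lt.mpr (by omega : n < k)]
  rw [← Finset.sum_subset (fun n hn => Finset.mem_range.mpr (Finset.mem_Ico.mp hn).2) hvanish,
    ← Finset.Ico_add_one_right_eq_Icc, ← Finset.sum_Ico_add']
  refine Finset.sum_congr rfl fun n hn => ?_
  have hkn : k ≤ n := (Finset.mem_Ico.mp hn).1
  have hdesc : (n.descFactorial k : ℝ) = n.factorial / (n - k).factorial := by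
    rw [eq_div_iff (by positivity), mul_comm]
    exact_mod_cast Nat.factorial_mul_descFactorial hkn
  rw [hdesc, Nat.add_sub_cancel, show n + 1 - k - 1 = n - k by omega,
    show l - (n + 1) = l - 1 - n by omega]
  ring

theorem stmt6_general (l k : ℕ) (s : ℝ) (p : ℝ → ℝ)
    (hp : ContDiffOn ℝ l p (Set.Ici 0))
    (U : Set ℝ) (hU : IsOpen U) (hsU : s ∈ U)
    (hint : ∀ j ≤ l, ∀ i ≤ k, ∀ σ ∈ U,
      IntegrableOn
        (fun t => t ^ i * Real.exp (σ * t) * iteratedDerivWithin j p (Set.Ici 0) t)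
        (Set.Ioi 0))
    (hlim : ∀ j ≤ l, ∀ i ≤ k, ∀ σ ∈ U,
      Tendsto (fun t => Real.exp (σ * t) * t ^ i * iteratedDerivWithin j p (Set.Ici 0) t)
        atTop (nhds 0))
    (M : ℝ → ℝ) (hM : ∀ σ ∈ U, M σ = ∫ t in Set.Ioi (0 : ℝ), Real.exp (σ * t) * p t) :
    ∫ t in Set.Ioi (0 : ℝ),
        Real.exp (s * t) * t ^ k * iteratedDerivWithin l p (Set.Ici 0) t =
      (-1 : ℝ) ^ l * iteratedDeriv k (fun σ => σ ^ l * M σ) s +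
        ∑ m ∈ Finset.Icc (k + 1) l,
          (-1 : ℝ) ^ m * iteratedDerivWithin (l - m) p (Set.Ici 0) 0 *
            (((m - 1).factorial : ℝ) / ((m - k - 1).factorial : ℝ)) * s ^ (m - k - 1) := by
  have hclosed : (fun σ => σ ^ l * M σ) =ᶠ[𝓝 s] fun σ => (-1) ^ l *
      ((∫ t in Ioi 0, t ^ 0 * Real.exp (σ * t) * iteratedDerivWithin l p (Ici 0) t) -
        ∑ n ∈ Finset.range l,
          (-1) ^ (n + 1) * iteratedDerivWithin (l - 1 - n) p (Ici 0) 0 * σ ^ n) := by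
    filter_upwards [hU.mem_nhds hsU] with σ hσ
    rw [hM σ hσ, pow_mul_integral_exp_mul_eq hp
      (fun j hj => by simpa using hint j hj 0 k.zero_le σ hσ)
      (fun j hj => by simpa using hlim j hj.le 0 k.zero_le σ hσ)]
    simp only [pow_zero, one_mul]
  have hG : ∀ i < k, ∀ σ ∈ U, HasDerivAt
      (fun σ => ∫ t in Ioi 0, t ^ i * Real.exp (σ * t) * iteratedDerivWithin l p (Ici 0) t)
      (∫ t in Ioi 0, t ^ (i + 1) * Real.exp (σ * t) * iteratedDerivWithin l p (Ici 0) t) σ :=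
    fun i hi σ hσ => hasDerivAt_integral_pow_mul_exp_mul hU (hint l le_rfl i hi.le)
      (hint l le_rfl (i + 1) hi) hσ
  have hswap : ∫ t in Ioi 0, Real.exp (s * t) * t ^ k * iteratedDerivWithin l p (Ici 0) t =
      ∫ t in Ioi 0, t ^ k * Real.exp (s * t) * iteratedDerivWithin l p (Ici 0) t := by
    simp_rw [mul_comm (Real.exp _) (_ ^ k)]
  rw [hclosed.iteratedDeriv_eq, iteratedDeriv_const_mul_field,
    iteratedDeriv_sub_eq_of_hasDerivAt_succ hU hG (by fun_prop) hsU, iteratedDeriv_sum_mul_pow,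
    ← sum_range_mul_descFactorial_eq_sum_Icc (fun j => iteratedDerivWithin j p (Ici 0) 0), hswap,
    ← mul_assoc, ← mul_pow]
  norm_num

/-- Laplace-transform rule: for `p` `l`-times continuously differentiable on `[0,∞)`,
with suitable integrability and decay near `+∞` in a neighborhood `U` of `s < 0`, and
`M(σ) = ∫_0^∞ e^{σt} p(t) dt` on `U`,
`∫_0^∞ e^{st} t^k p^{(l)}(t) dt = (−1)^l d^k/dσ^k [σ^l M(σ)]|_{σ=s}
  + Σ_{m=k+1}^{l} (−1)^m p^{(l−m)}(0) ((m−1)!/(m−k−1)!) s^{m−k−1}`. -/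
theorem stmt6 (l k : ℕ) (hl : 1 ≤ l) (s : ℝ) (hs : s < 0) (p : ℝ → ℝ)
    (hp : ContDiffOn ℝ l p (Set.Ici 0))
    (U : Set ℝ) (hU : IsOpen U) (hsU : s ∈ U)
    (hint : ∀ j ≤ l, ∀ i ≤ k, ∀ σ ∈ U,
      IntegrableOn
        (fun t => t ^ i * Real.exp (σ * t) * iteratedDerivWithin j p (Set.Ici 0) t)
        (Set.Ioi 0))
    (hlim : ∀ j ≤ l, ∀ i ≤ k, ∀ σ ∈ U,
      Tendsto (fun t => Real.exp (σ * t) * t ^ i * iteratedDerivWithin j p (Set.Ici 0) t)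
        atTop (nhds 0))
    (M : ℝ → ℝ) (hM : ∀ σ ∈ U, M σ = ∫ t in Set.Ioi (0 : ℝ), Real.exp (σ * t) * p t) :
    ∫ t in Set.Ioi (0 : ℝ),
        Real.exp (s * t) * t ^ k * iteratedDerivWithin l p (Set.Ici 0) t =
      (-1 : ℝ) ^ l * iteratedDeriv k (fun σ => σ ^ l * M σ) s +
        ∑ m ∈ Finset.Icc (k + 1) l,
          (-1 : ℝ) ^ m * iteratedDerivWithin (l - m) p (Set.Ici 0) 0 *
            (((m - 1).factorial : ℝ) / ((m - k - 1).factorial : ℝ)) * s ^ (m - k - 1) :=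
  stmt6_general l k s p hp U hU hsU hint hlim M hM
end

section
/- Let N ≤ N_R be positive integers and let a ∈ ℝ. Then for every real s ≠ 1, the double series Σ_{n=0}^∞ A_n(a) Σ_{m=0}^n binom(n,m) (−1)^m (1 − s)^{−(N+n−m)} converges absolutely and its sum equals (1 − s)^{−N} · ₁F₁(N; N_R; a s/(1 − s)). -/
/-- The confluent hypergeometric function `₁F₁(b; c; σ)` defined by its series. -/
noncomputable def oneFone (b c : ℕ) (σ : ℝ) : ℝ :=
  ∑' n : ℕ, (poch b n / poch c n) * σ ^ n / (n.factorial : ℝ)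

/-- `A_n(a) = ((N)_n/(N_R)_n) aⁿ/n!`. -/
noncomputable def Acoef (N NR : ℕ) (a : ℝ) (n : ℕ) : ℝ :=
  (poch N n / poch NR n) * a ^ n / (n.factorial : ℝ)

lemma poch_pos7 {x : ℝ} (hx : 0 < x) (n : ℕ) : 0 < poch x n := by
  unfold poch; exact Finset.prod_pos (fun i _ => by positivity)

lemma poch_mono7 {x y : ℝ} (hx : 0 ≤ x) (hxy : x ≤ y) (n : ℕ) : poch x n ≤ poch y n := by
  unfold poch
  exact Finset.prod_le_prod (fun i _ => by positivity) (fun i _ => by linarith)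

lemma aux_inner_sum7 (N : ℕ) (s : ℝ) (h : (1:ℝ) - s ≠ 0) (n : ℕ) :
    ∑ m ∈ Finset.range (n+1), (n.choose m : ℝ) * (-1:ℝ)^m * (1-s)^(-((N+n-m:ℕ):ℤ))
    = (1-s)^(-(N:ℤ)) * (s/(1-s))^n := by
  have key : ∀ m ∈ Finset.range (n+1),
      (n.choose m : ℝ) * (-1:ℝ)^m * (1-s)^(-((N+n-m:ℕ):ℤ))
      = (1-s)^(-(N:ℤ)) * (1-s)^(-(n:ℤ)) * ((s-1)^m * 1^(n-m) * (n.choose m : ℝ)) := by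
    intro m hm
    have hm' : m ≤ n := Nat.lt_succ_iff.mp (Finset.mem_range.mp hm)
    have hcast : (-((N+n-m:ℕ):ℤ)) = -(N:ℤ) + (-(n:ℤ)) + (m:ℤ) := by
      have : (((N+n-m:ℕ)):ℤ) = (N:ℤ) + (n:ℤ) - (m:ℤ) := by
        rw [Nat.cast_sub (by omega)]; push_cast; ring
      rw [this]; ring
    rw [hcast, zpow_add₀ h, zpow_add₀ h, zpow_natCast]
    have : (-1:ℝ)^m * (1-s)^m = (s-1)^m := by rw [← mul_pow]; ring_nf
    calc (n.choose m : ℝ) * (-1:ℝ)^m * ((1-s)^(-(N:ℤ)) * (1-s)^(-(n:ℤ)) * (1-s)^m)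
        = (1-s)^(-(N:ℤ)) * (1-s)^(-(n:ℤ)) * (((-1:ℝ)^m * (1-s)^m) * 1^(n-m) * (n.choose m:ℝ)) := by ring
      _ = _ := by rw [this]
  rw [Finset.sum_congr rfl key, ← Finset.mul_sum, ← add_pow]
  have : (s - 1 + 1 : ℝ) = s := by ring
  rw [this]
  rw [mul_assoc]
  congr 1
  rw [div_pow, ← zpow_natCast (1-s) n, div_eq_mul_inv, ← zpow_neg, mul_comm]

/-- For positive integers `N ≤ N_R`, `a ∈ ℝ`, and `s ≠ 1`, the series
`Σ_n A_n(a) Σ_{m=0}^n C(n,m) (−1)^m (1−s)^{−(N+n−m)}` converges absolutely and its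
sum equals `(1−s)^{−N} ₁F₁(N; N_R; as/(1−s))`. -/
theorem stmt7 (N NR : ℕ) (hN : 0 < N) (hNNR : N ≤ NR) (a s : ℝ) (hs : s ≠ 1) :
    Summable (fun n : ℕ =>
      |Acoef N NR a n *
        ∑ m ∈ Finset.range (n + 1),
          (n.choose m : ℝ) * (-1 : ℝ) ^ m * (1 - s) ^ (-((N + n - m : ℕ) : ℤ))|) ∧
    ∑' n : ℕ,
        Acoef N NR a n *
          ∑ m ∈ Finset.range (n + 1),
            (n.choose m : ℝ) * (-1 : ℝ) ^ m * (1 - s) ^ (-((N + n - m : ℕ) : ℤ)) =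
      (1 - s) ^ (-(N : ℤ)) * oneFone N NR (a * s / (1 - s)) := by
  have h : (1:ℝ) - s ≠ 0 := sub_ne_zero.mpr (Ne.symm hs)
  set σ : ℝ := a * s / (1 - s) with hσ
  set f : ℕ → ℝ := fun n => (poch N n / poch NR n) * σ ^ n / (n.factorial : ℝ) with hf
  have hterm : ∀ n : ℕ,
      Acoef N NR a n *
        ∑ m ∈ Finset.range (n + 1),
          (n.choose m : ℝ) * (-1 : ℝ) ^ m * (1 - s) ^ (-((N + n - m : ℕ) : ℤ)) =
      (1 - s) ^ (-(N : ℤ)) * f n := by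
    intro n
    rw [aux_inner_sum7 N s h n]
    have hσn : σ ^ n = a ^ n * (s / (1 - s)) ^ n := by
      rw [hσ, mul_div_assoc, mul_pow]
    simp only [hf, Acoef, hσn]
    ring
  -- summability of f in absolute value
  have hr : ∀ n : ℕ, |poch N n / poch NR n| ≤ 1 := by
    intro n
    have hNp : (0:ℝ) < poch N n := poch_pos7 (by exact_mod_cast hN) n
    have hNRp : (0:ℝ) < poch NR n := poch_pos7 (by exact_mod_cast (lt_of_lt_of_le hN hNNR)) n
    have hle : poch (N:ℝ) n ≤ poch (NR:ℝ) n :=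
      poch_mono7 (le_of_lt (by exact_mod_cast hN)) (by exact_mod_cast hNNR) n
    rw [abs_of_pos (div_pos hNp hNRp)]
    exact (div_le_one hNRp).mpr hle
  have habsf : Summable (fun n => |f n|) := by
    refine Summable.of_nonneg_of_le (fun n => abs_nonneg _) ?_
      (Real.summable_pow_div_factorial |σ|)
    intro n
    have : f n = (poch N n / poch NR n) * (σ ^ n / (n.factorial : ℝ)) := by
      simp only [hf]; ring
    rw [this, abs_mul]
    calc |poch N n / poch NR n| * |σ ^ n / (n.factorial : ℝ)|
        ≤ 1 * |σ ^ n / (n.factorial : ℝ)| :=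
          mul_le_mul_of_nonneg_right (hr n) (abs_nonneg _)
      _ = |σ| ^ n / (n.factorial : ℝ) := by
          rw [one_mul, abs_div, abs_pow, Nat.abs_cast]
  constructor
  · have : Summable (fun n => |(1 - s) ^ (-(N : ℤ))| * |f n|) := habsf.mul_left _
    simp only [hterm, abs_mul]
    exact this
  · have hfs : Summable f := by
      have := habsf
      rw [← summable_abs_iff]
      exact this
    calc ∑' n : ℕ, (Acoef N NR a n *
          ∑ m ∈ Finset.range (n + 1),
            (n.choose m : ℝ) * (-1 : ℝ) ^ m * (1 - s) ^ (-((N + n - m : ℕ) : ℤ)))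
        = ∑' n : ℕ, (1 - s) ^ (-(N : ℤ)) * f n := tsum_congr hterm
      _ = (1 - s) ^ (-(N : ℤ)) * ∑' n, f n := tsum_mul_left
      _ = (1 - s) ^ (-(N : ℤ)) * oneFone N NR σ := rfl
end

section
/- Let N ≤ N_R be positive integers and a ∈ ℝ, and let p(t, a) = Σ_{n=0}^∞ A_n(a) Σ_{m=0}^n binom(n,m) (−1)^m t^{N+n−m−1} e^{−t}/(N+n−m−1)! for t > 0 (this double series converges absolutely for every t > 0). Then the right limit at zero of p(·, a) is: lim_{t → 0+} p(t, a) = ₁F₁(N; N_R; −a) if N = 1, and lim_{t → 0+} p(t, a) = 0 if N > 1. -/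
/-- The (normalized) ZF SNR density
`p(t,a) = Σ_n A_n(a) Σ_{m=0}^n C(n,m) (−1)^m t^{N+n−m−1} e^{−t}/(N+n−m−1)!`. -/
noncomputable def pdfZF (N NR : ℕ) (t a : ℝ) : ℝ :=
  ∑' n : ℕ, Acoef N NR a n *
    ∑ m ∈ Finset.range (n + 1),
      (n.choose m : ℝ) * (-1 : ℝ) ^ m * t ^ (N + n - m - 1) * Real.exp (-t)
        / ((N + n - m - 1).factorial : ℝ)

lemma poch_pos {N : ℕ} (hN : 0 < N) (n : ℕ) : 0 < poch (N : ℝ) n := by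
  apply Finset.prod_pos
  intro i _
  have : (0:ℝ) < N := by exact_mod_cast hN
  positivity

lemma poch_le {N NR : ℕ} (h : N ≤ NR) (n : ℕ) : poch (N : ℝ) n ≤ poch (NR : ℝ) n := by
  apply Finset.prod_le_prod
  · intro i _; positivity
  · intro i _
    have : (N:ℝ) ≤ NR := by exact_mod_cast h
    linarith

lemma ratio_bound {N NR : ℕ} (hN : 0 < N) (h : N ≤ NR) (n : ℕ) :
    poch (N : ℝ) n / poch (NR : ℝ) n ≤ 1 := by
  rw [div_le_one (lt_of_lt_of_le (poch_pos hN n) (poch_le h n))]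
  exact poch_le h n

lemma abs_inner_sum_le {N : ℕ} (n : ℕ) {t : ℝ} (ht : t ∈ Set.Icc (0:ℝ) 1) :
    |∑ m ∈ Finset.range (n + 1),
      (n.choose m : ℝ) * (-1 : ℝ) ^ m * t ^ (N + n - m - 1) * Real.exp (-t)
        / ((N + n - m - 1).factorial : ℝ)| ≤ 2 ^ n := by
  obtain ⟨ht0, ht1⟩ := ht
  calc |∑ m ∈ Finset.range (n + 1),
      (n.choose m : ℝ) * (-1 : ℝ) ^ m * t ^ (N + n - m - 1) * Real.exp (-t)
        / ((N + n - m - 1).factorial : ℝ)|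
      ≤ ∑ m ∈ Finset.range (n + 1), |(n.choose m : ℝ) * (-1 : ℝ) ^ m * t ^ (N + n - m - 1) * Real.exp (-t)
        / ((N + n - m - 1).factorial : ℝ)| := Finset.abs_sum_le_sum_abs _ _
    _ ≤ ∑ m ∈ Finset.range (n + 1), (n.choose m : ℝ) := by
        apply Finset.sum_le_sum
        intro m _
        rw [abs_div, abs_mul, abs_mul, abs_mul, abs_pow, abs_neg, abs_one, one_pow, mul_one]
        rw [abs_of_nonneg (pow_nonneg ht0 _), abs_of_nonneg (Real.exp_nonneg _),
          Nat.abs_cast, Nat.abs_cast]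
        have h1 : t ^ (N + n - m - 1) ≤ 1 := pow_le_one₀ ht0 ht1
        have h2 : Real.exp (-t) ≤ 1 := Real.exp_le_one_iff.mpr (by linarith)
        have h3 : (1:ℝ) ≤ ((N + n - m - 1).factorial : ℝ) := by
          exact_mod_cast Nat.one_le_iff_ne_zero.mpr (Nat.factorial_ne_zero _)
        calc (n.choose m : ℝ) * t ^ (N + n - m - 1) * Real.exp (-t) / ((N + n - m - 1).factorial : ℝ)
            ≤ (n.choose m : ℝ) * 1 * 1 / 1 := by
              apply div_le_div₀ (by positivity) _ one_pos h3
              have he := Real.exp_nonneg (-t)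
              have hc : (0:ℝ) ≤ (n.choose m : ℝ) := Nat.cast_nonneg _
              have hp : (0:ℝ) ≤ t ^ (N + n - m - 1) := pow_nonneg ht0 _
              nlinarith [mul_le_mul (mul_le_mul (le_refl ((n.choose m:ℝ))) h1 hp hc) h2 he (by positivity : (0:ℝ) ≤ (n.choose m:ℝ) * 1)]
          _ = (n.choose m : ℝ) := by ring
    _ = 2 ^ n := by exact_mod_cast Nat.sum_range_choose n

lemma abs_Acoef_le {N NR : ℕ} (hN : 0 < N) (h : N ≤ NR) (a : ℝ) (n : ℕ) :
    |Acoef N NR a n| ≤ |a| ^ n / n.factorial := by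
  unfold Acoef
  rw [abs_div, abs_mul, abs_pow, Nat.abs_cast,
    abs_of_nonneg (le_of_lt (div_pos (poch_pos hN n) (lt_of_lt_of_le (poch_pos hN n) (poch_le h n))))]
  apply div_le_div₀ (by positivity) _ (by exact_mod_cast Nat.factorial_pos n) le_rfl
  calc poch (N:ℝ) n / poch (NR:ℝ) n * |a| ^ n ≤ 1 * |a| ^ n := by
        apply mul_le_mul_of_nonneg_right (ratio_bound hN h n) (by positivity)
    _ = |a| ^ n := one_mul _

lemma pdfZF_cont {N NR : ℕ} (hN : 0 < N) (h : N ≤ NR) (a : ℝ) :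
    ContinuousOn (fun t => pdfZF N NR t a) (Set.Icc (0:ℝ) 1) := by
  unfold pdfZF
  apply continuousOn_tsum (u := fun n => (2 * |a|) ^ n / n.factorial)
  · intro n
    apply Continuous.continuousOn
    fun_prop
  · exact Real.summable_pow_div_factorial _
  · intro n t ht
    rw [Real.norm_eq_abs, abs_mul]
    calc |Acoef N NR a n| * |∑ m ∈ Finset.range (n + 1),
          (n.choose m : ℝ) * (-1 : ℝ) ^ m * t ^ (N + n - m - 1) * Real.exp (-t)
            / ((N + n - m - 1).factorial : ℝ)|
        ≤ (|a| ^ n / n.factorial) * 2 ^ n := by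
          apply mul_le_mul (abs_Acoef_le hN h a n) (abs_inner_sum_le n ht) (abs_nonneg _) (by positivity)
      _ = (2 * |a|) ^ n / n.factorial := by rw [mul_pow]; ring

lemma pdfZF_zero_one {NR : ℕ} (a : ℝ) : pdfZF 1 NR 0 a = oneFone 1 NR (-a) := by
  unfold pdfZF oneFone
  apply tsum_congr
  intro n
  have hsum : ∑ m ∈ Finset.range (n + 1),
      (n.choose m : ℝ) * (-1 : ℝ) ^ m * (0:ℝ) ^ (1 + n - m - 1) * Real.exp (-0)
        / ((1 + n - m - 1).factorial : ℝ) = (-1 : ℝ) ^ n := by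
    rw [Finset.sum_eq_single n]
    · simp
    · intro m hm hmn
      have hm' : m < n := by
        have := Finset.mem_range.mp hm; omega
      have : (0:ℝ) ^ (1 + n - m - 1) = 0 := zero_pow (by omega)
      simp [this]
    · intro hn; exact absurd (Finset.self_mem_range_succ n) hn
  rw [hsum]
  unfold Acoef
  rw [neg_pow]
  ring

lemma pdfZF_zero_gt {N NR : ℕ} (hN : 1 < N) (a : ℝ) : pdfZF N NR 0 a = 0 := by
  unfold pdfZF
  have : ∀ n : ℕ, Acoef N NR a n *
      ∑ m ∈ Finset.range (n + 1),
        (n.choose m : ℝ) * (-1 : ℝ) ^ m * (0:ℝ) ^ (N + n - m - 1) * Real.exp (-0)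
          / ((N + n - m - 1).factorial : ℝ) = 0 := by
    intro n
    have : ∑ m ∈ Finset.range (n + 1),
        (n.choose m : ℝ) * (-1 : ℝ) ^ m * (0:ℝ) ^ (N + n - m - 1) * Real.exp (-0)
          / ((N + n - m - 1).factorial : ℝ) = 0 := by
      apply Finset.sum_eq_zero
      intro m hm
      have hm' : m ≤ n := Nat.lt_succ_iff.mp (Finset.mem_range.mp hm)
      have : (0:ℝ) ^ (N + n - m - 1) = 0 := zero_pow (by omega)
      simp [this]
    rw [this, mul_zero]
  simp only [this, tsum_zero]

/-- The right limit at zero of `t ↦ p(t,a)` equals `₁F₁(N; N_R; −a)` if `N = 1`,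
and `0` if `N > 1`. -/
theorem stmt9 (N NR : ℕ) (hN : 0 < N) (hNNR : N ≤ NR) (a : ℝ) :
    (N = 1 →
      Filter.Tendsto (fun t => pdfZF N NR t a) (nhdsWithin 0 (Set.Ioi 0))
        (nhds (oneFone N NR (-a)))) ∧
    (1 < N →
      Filter.Tendsto (fun t => pdfZF N NR t a) (nhdsWithin 0 (Set.Ioi 0))
        (nhds 0)) := by
  have hmem : (0:ℝ) ∈ Set.Icc (0:ℝ) 1 := ⟨le_refl 0, zero_le_one⟩
  have hcont := (pdfZF_cont hN hNNR a).continuousWithinAt hmem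
  have htends : Filter.Tendsto (fun t => pdfZF N NR t a) (nhdsWithin 0 (Set.Ioi 0))
      (nhds (pdfZF N NR 0 a)) := by
    rw [← nhdsWithin_Ioc_eq_nhdsGT (zero_lt_one (α := ℝ))]
    exact hcont.mono_left (nhdsWithin_mono _ Set.Ioc_subset_Icc_self)
  constructor
  · intro h1
    subst h1
    rwa [pdfZF_zero_one a] at htends
  · intro h1
    rwa [pdfZF_zero_gt h1 a] at htends
end
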